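/- Let V be a ℂ-vector space, c ∈ ℂ nonzero, κ, κ̃ ∈ ℂ, and let t_{11}, t_{12}, t_{22} : D → End(V) (D ⊆ ℂ) satisfy, for all distinct u, v ∈ D: t_{12}(u)t_{12}(v) = t_{12}(v)t_{12}(u); t_{11}(v)t_{12}(u) = f(u,v) t_{12}(u)t_{11}(v) + g(v,u) t_{12}(v)t_{11}(u); t_{22}(v)t_{12}(u) = f(v,u) t_{12}(u)t_{22}(v) + g(u,v) t_{12}(v)t_{22}(u). Let |0⟩ ∈ V and λ_1, λ_2 : D → ℂ satisfy t_{11}(u)|0⟩ = λ_1(u)|0⟩ and t_{22}(u)|0⟩ = λ_2(u)|0⟩ for all u ∈ D. Set t_d(z) = κ̃ t_{11}(z) + κ t_{22}(z) and 𝔹(ū) = ∏_{i=1}^M t_{12}(u_i)|0⟩. Then for pairwise distinct u_1, …, u_M ∈ D and z ∈ D distinct from all u_i: t_d(z)𝔹(ū) = Λ_d(z,ū) 𝔹(ū) + Σ_{i=1}^M g(u_i,z) E_d(u_i,ū_i) t_{12}(z) 𝔹(ū_i), where Λ_d(z,ū) = κ̃ λ_1(z) f(ū,z) + κ λ_2(z)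 f(z,ū) and E_d(u_i,ū_i) = −κ̃ λ_1(u_i) f(ū_i,u_i) + κ λ_2(u_i) f(u_i,ū_i). In particular, if the Bethe equations E_d(u_i,ū_i) = 0 hold for all i = 1, …, M, then 𝔹(ū) is an eigenvector of t_d(z) with eigenvalue Λ_d(z,ū). -/

import Mathlib

/-!
Induction on the number of creation operators `B = t₁₂`. Moving `A(v)` (`t₁₁(v)` or
`t₂₂(v)`) through `B(u₁)` by the exchange relation gives a term with `A(v)` and one with
`A(u₁)` acting on the shorter Bethe vector; applying the induction hypothesis to both, the
coefficients of each unwanted vector `B(v) 𝔹(ū_i)` recombine by the rational identity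
`f(a,b) g(b,e) + g(b,a) g(a,e) = g(b,e) f(a,e)`. The twisted transfer matrix is then the
`κ̃, κ` combination of the formulas for `t₁₁` and `t₂₂`.
-/

open Finset Function

theorem Fin.prod_univ_erase_zero {M : Type*} [CommMonoid M] {n : ℕ} (f : Fin (n + 1) → M) :
    ∏ j ∈ univ.erase 0, f j = ∏ j : Fin n, f j.succ := by
  simp [← filter_ne', prod_filter, Fin.prod_univ_succ, Fin.succ_ne_zero]

theorem Fin.prod_univ_erase_succ {M : Type*} [CommMonoid M] {n : ℕ} (f : Fin (n + 1) → M)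
    (i : Fin n) : ∏ j ∈ univ.erase i.succ, f j = f 0 * ∏ j ∈ univ.erase i, f j.succ := by
  simp [← filter_ne', prod_filter, Fin.prod_univ_succ, (Fin.succ_ne_zero i).symm]

theorem rational_exchange_identity {K : Type*} [Field K] (c : K) {x y w : K}
    (hxy : x ≠ y) (hyw : y ≠ w) (hxw : x ≠ w) :
    (x - y + c) / (x - y) * (c / (y - w)) + c / (y - x) * (c / (x - w))
      = c / (y - w) * ((x - w + c) / (x - w)) := by
  have := sub_ne_zero.2 hxy
  have := sub_ne_zero.2 hxy.symm
  have := sub_ne_zero.2 hyw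
  have := sub_ne_zero.2 hxw
  field_simp
  ring

theorem rational_exchange_identity_rev {K : Type*} [Field K] (c : K) {x y w : K}
    (hxy : x ≠ y) (hyw : y ≠ w) (hxw : x ≠ w) :
    (y - x + c) / (y - x) * (c / (w - y)) + c / (x - y) * (c / (w - x))
      = c / (w - y) * ((w - x + c) / (w - x)) := by
  have := sub_ne_zero.2 hxy
  have := sub_ne_zero.2 hxy.symm
  have := sub_ne_zero.2 hyw.symm
  have := sub_ne_zero.2 hxw.symm
  field_simp
  ring

section BetheVector

variable {S R V : Type*} [CommRing R] [AddCommGroup V] [Module R V]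
  (B : S → Module.End R V) (vac : V)

def betheVector {M : ℕ} (u : Fin M → S) : V :=
  (List.ofFn fun i => B (u i)).prod vac

def betheVectorErase {M : ℕ} (u : Fin M → S) (i : Fin M) : V :=
  (List.ofFn fun j => if j = i then 1 else B (u j)).prod vac

variable {B vac}

@[simp]
theorem betheVector_zero (u : Fin 0 → S) : betheVector B vac u = vac := rfl

theorem betheVector_succ {M : ℕ} (u : Fin (M + 1) → S) :
    betheVector B vac u = B (u 0) (betheVector B vac (Fin.tail u)) := by
  simp [betheVector, List.ofFn_succ, Fin.tail]

theorem betheVectorErase_zero {M : ℕ} (u : Fin (M + 1) → S) :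
    betheVectorErase B vac u 0 = betheVector B vac (Fin.tail u) := by
  simp [betheVectorErase, betheVector, List.ofFn_succ, Fin.tail, Fin.succ_ne_zero]

theorem betheVectorErase_succ {M : ℕ} (u : Fin (M + 1) → S) (i : Fin M) :
    betheVectorErase B vac u i.succ = B (u 0) (betheVectorErase B vac (Fin.tail u) i) := by
  simp [betheVectorErase, List.ofFn_succ, Fin.tail, (Fin.succ_ne_zero i).symm]

theorem apply_betheVector_of_exchange (D : Set S) (A : S → Module.End R V) (μ : S → R)
    (φ ψ : S → S → R) (hBB : ∀ x ∈ D, ∀ y ∈ D, Commute (B x) (B y))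
    (hAB : ∀ x ∈ D, ∀ y ∈ D, x ≠ y →
      A y * B x = φ x y • (B x * A y) + ψ y x • (B y * A x))
    (hvac : ∀ x ∈ D, A x vac = μ x • vac)
    (hφψ : ∀ x y w, x ≠ y → y ≠ w → x ≠ w →
      φ x y * ψ y w + ψ y x * ψ x w = ψ y w * φ x w)
    {M : ℕ} (u : Fin M → S) (hu : ∀ i, u i ∈ D) (hinj : Injective u)
    (v : S) (hv : v ∈ D) (hvu : ∀ i, v ≠ u i) :
    A v (betheVector B vac u) = (μ v * ∏ i, φ (u i) v) • betheVector B vac u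
      + ∑ i, (ψ v (u i) * μ (u i) * ∏ j ∈ univ.erase i, φ (u j) (u i))
          • B v (betheVectorErase B vac u i) := by
  induction M generalizing v with
  | zero => simp [hvac v hv]
  | succ M ih =>
    have hu' : ∀ i, Fin.tail u i ∈ D := fun i => hu i.succ
    have hinj' : Injective (Fin.tail u) := hinj.comp (Fin.succ_injective M)
    have hu0 : ∀ i, u 0 ≠ Fin.tail u i := fun i h => Fin.succ_ne_zero i (hinj h).symm
    have hexch : ∀ x,
        A v (B (u 0) x) = φ (u 0) v • B (u 0) (A v x) + ψ v (u 0) • B v (A (u 0) x) :=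
      fun x => congr($(hAB _ (hu 0) v hv (hvu 0).symm) x)
    have hcomm : ∀ x, B v (B (u 0) x) = B (u 0) (B v x) :=
      fun x => congr($(hBB v hv (u 0) (hu 0)) x)
    have hcoeff : ∀ i : Fin M, φ (u 0) v * ψ v (u i.succ) + ψ v (u 0) * ψ (u 0) (u i.succ)
        = ψ v (u i.succ) * φ (u 0) (u i.succ) :=
      fun i => hφψ _ _ _ (hvu 0).symm (hvu i.succ) (hu0 i)
    rw [betheVector_succ, hexch, ih (Fin.tail u) hu' hinj' v hv (fun i => hvu i.succ),
      ih (Fin.tail u) hu' hinj' (u 0) (hu 0) hu0, Fin.sum_univ_succ, Fin.prod_univ_succ,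
      Fin.prod_univ_erase_zero, betheVectorErase_zero]
    simp only [Fin.prod_univ_erase_succ, betheVectorErase_succ, map_add, map_smul, map_sum,
      smul_add, smul_sum, smul_smul, hcomm, Fin.tail]
    set P : Fin M → R := fun i => ∏ j ∈ univ.erase i, φ (u j.succ) (u i.succ)
    set w : Fin M → V := fun i => B (u 0) (B v (betheVectorErase B vac (Fin.tail u) i))
    have hsum : ∑ i, (ψ v (u i.succ) * μ (u i.succ) * (φ (u 0) (u i.succ) * P i)) • w i
        = ∑ i, (φ (u 0) v * (ψ v (u i.succ) * μ (u i.succ) * P i)) • w i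
          + ∑ i, (ψ v (u 0) * (ψ (u 0) (u i.succ) * μ (u i.succ) * P i)) • w i := by
      rw [← sum_add_distrib]
      refine sum_congr rfl fun i _ => ?_
      rw [← add_smul]
      congr 1
      linear_combination (-(μ (u i.succ) * P i)) * hcoeff i
    rw [hsum]
    module

end BetheVector

open Finset in
theorem ABA_diagonal_twist_general
    {V : Type*} [AddCommGroup V] [Module ℂ V] (c : ℂ)
    (D : Set ℂ) (t11 t12 t22 : ℂ → Module.End ℂ V) (κ κt : ℂ)
    (h1212 : ∀ u ∈ D, ∀ v ∈ D, t12 u * t12 v = t12 v * t12 u)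
    (h1112 : ∀ u ∈ D, ∀ v ∈ D, u ≠ v →
      t11 v * t12 u = ((u - v + c) / (u - v)) • (t12 u * t11 v)
        + (c / (v - u)) • (t12 v * t11 u))
    (h2212 : ∀ u ∈ D, ∀ v ∈ D, u ≠ v →
      t22 v * t12 u = ((v - u + c) / (v - u)) • (t12 u * t22 v)
        + (c / (u - v)) • (t12 v * t22 u))
    (vac : V) (lam1 lam2 : ℂ → ℂ)
    (hvac1 : ∀ u ∈ D, t11 u vac = lam1 u • vac)
    (hvac2 : ∀ u ∈ D, t22 u vac = lam2 u • vac)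
    (M : ℕ) (u : Fin M → ℂ) (hu : ∀ i, u i ∈ D) (huinj : Function.Injective u)
    (z : ℂ) (hz : z ∈ D) (hzu : ∀ i, z ≠ u i)
    (B : V) (hB : B = (List.ofFn fun i => t12 (u i)).prod vac)
    (Bsub : Fin M → V)
    (hBsub : ∀ i, Bsub i =
      (List.ofFn fun j => if j = i then (1 : Module.End ℂ V) else t12 (u j)).prod vac)
    (Λd : ℂ) (hΛd : Λd = κt * lam1 z * (∏ i, (u i - z + c) / (u i - z))
      + κ * lam2 z * (∏ i, (z - u i + c) / (z - u i)))
    (Ed : Fin M → ℂ)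
    (hEd : ∀ i, Ed i =
      -(κt * lam1 (u i) * ∏ j ∈ univ.erase i, (u j - u i + c) / (u j - u i))
      + κ * lam2 (u i) * ∏ j ∈ univ.erase i, (u i - u j + c) / (u i - u j)) :
    (κt • t11 z + κ • t22 z) B =
      Λd • B + ∑ i, ((c / (u i - z)) * Ed i) • (t12 z (Bsub i)) ∧
    ((∀ i, Ed i = 0) → (κt • t11 z + κ • t22 z) B = Λd • B) := by
  have h11 := apply_betheVector_of_exchange D t11 lam1 (fun x y => (x - y + c) / (x - y))
    (fun x y => c / (x - y)) h1212 h1112 hvac1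
    (fun _ _ _ => rational_exchange_identity c) u hu huinj z hz hzu
  have h22 := apply_betheVector_of_exchange D t22 lam2 (fun x y => (y - x + c) / (y - x))
    (fun x y => c / (y - x)) h1212 h2212 hvac2
    (fun _ _ _ => rational_exchange_identity_rev c) u hu huinj z hz hzu
  have hB' : B = betheVector t12 vac u := hB
  have hBsub' : Bsub = betheVectorErase t12 vac u := funext hBsub
  have hcoeff : ∀ i, κt * (c / (z - u i) * lam1 (u i) *
        ∏ j ∈ univ.erase i, (u j - u i + c) / (u j - u i))
      + κ * (c / (u i - z) * lam2 (u i) * ∏ j ∈ univ.erase i, (u i - u j + c) / (u i - u j))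
      = c / (u i - z) * Ed i := fun i => by
    rw [hEd, ← neg_sub, div_neg]
    ring
  have hoff_shell : (κt • t11 z + κ • t22 z) B =
      Λd • B + ∑ i, ((c / (u i - z)) * Ed i) • (t12 z (Bsub i)) := by
    rw [hB', hBsub', hΛd, LinearMap.add_apply, LinearMap.smul_apply, LinearMap.smul_apply,
      h11, h22]
    simp only [smul_add, smul_sum, smul_smul]
    rw [add_add_add_comm, ← add_smul, ← sum_add_distrib]
    simp only [← add_smul, hcoeff]
    congr 2
    ring
  exact ⟨hoff_shell, fun hbethe => by simp [hoff_shell, hbethe]⟩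

open Finset in
/-- Algebraic Bethe ansatz for the diagonally twisted transfer matrix
`t_d(z) = κ̃ t₁₁(z) + κ t₂₂(z)` acting on the Bethe vector `𝔹(ū) = ∏ t₁₂(uᵢ)|0⟩`:
the off-shell action formula, and the on-shell eigenvector statement. -/
theorem ABA_diagonal_twist
    {V : Type*} [AddCommGroup V] [Module ℂ V] (c : ℂ) (hc : c ≠ 0)
    (D : Set ℂ) (t11 t12 t22 : ℂ → Module.End ℂ V) (κ κt : ℂ)
    (h1212 : ∀ u ∈ D, ∀ v ∈ D, t12 u * t12 v = t12 v * t12 u)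
    (h1112 : ∀ u ∈ D, ∀ v ∈ D, u ≠ v →
      t11 v * t12 u = ((u - v + c) / (u - v)) • (t12 u * t11 v)
        + (c / (v - u)) • (t12 v * t11 u))
    (h2212 : ∀ u ∈ D, ∀ v ∈ D, u ≠ v →
      t22 v * t12 u = ((v - u + c) / (v - u)) • (t12 u * t22 v)
        + (c / (u - v)) • (t12 v * t22 u))
    (vac : V) (lam1 lam2 : ℂ → ℂ)
    (hvac1 : ∀ u ∈ D, t11 u vac = lam1 u • vac)
    (hvac2 : ∀ u ∈ D, t22 u vac = lam2 u • vac)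
    (M : ℕ) (u : Fin M → ℂ) (hu : ∀ i, u i ∈ D) (huinj : Function.Injective u)
    (z : ℂ) (hz : z ∈ D) (hzu : ∀ i, z ≠ u i)
    (B : V) (hB : B = (List.ofFn fun i => t12 (u i)).prod vac)
    (Bsub : Fin M → V)
    (hBsub : ∀ i, Bsub i =
      (List.ofFn fun j => if j = i then (1 : Module.End ℂ V) else t12 (u j)).prod vac)
    (Λd : ℂ) (hΛd : Λd = κt * lam1 z * (∏ i, (u i - z + c) / (u i - z))
      + κ * lam2 z * (∏ i, (z - u i + c) / (z - u i)))
    (Ed : Fin M → ℂ)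
    (hEd : ∀ i, Ed i =
      -(κt * lam1 (u i) * ∏ j ∈ univ.erase i, (u j - u i + c) / (u j - u i))
      + κ * lam2 (u i) * ∏ j ∈ univ.erase i, (u i - u j + c) / (u i - u j)) :
    (κt • t11 z + κ • t22 z) B =
      Λd • B + ∑ i, ((c / (u i - z)) * Ed i) • (t12 z (Bsub i)) ∧
    ((∀ i, Ed i = 0) → (κt • t11 z + κ • t22 z) B = Λd • B) :=
  ABA_diagonal_twist_general c D t11 t12 t22 κ κt h1212 h1112 h2212 vac lam1 lam2 hvac1 hvac2 M u hu
    huinj z hz hzu B hB Bsub hBsub Λd hΛd Ed hEd
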